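/- For 0 < p ≤ 2 and 0 < ε < 1, the Schatten p-norm satisfies the smoothness property with parameters (ε, ε): for all real matrices A, Y, C with m columns such that A is the vertical concatenation of some matrix X and Y, if (1 − ε)·‖A‖_{S_p} ≤ ‖Y‖_{S_p}, then (1 − ε)·‖[A; C]‖_{S_p} ≤ ‖[Y; C]‖_{S_p}, where [M; C] denotes vertical concatenation. -/

import Mathlib

/-!
Write `q = p / 2` and `F(N) = ∑ᵢ λᵢ(N) ^ q`, so that `‖M‖_{S_p} ^ p = F(Mᴴ M)`; the Gram matrix of
a vertical concatenation is the sum of the Gram matrices. Abbreviating `F(Mᴴ M)` to `F(M)` and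
putting `θ = (1 - ε) ^ p ≤ 1`, the hypothesis reads `θ F(A) ≤ F(Y)`, and
`θ F([A; C]) ≤ θ (F(A) + F([Y; C]) - F(Y)) ≤ F(Y) + θ (F([Y; C]) - F(Y)) ≤ F([Y; C])`
once `F` is known to be submodular, `F(R + T + Q) + F(T) ≤ F(R + T) + F(T + Q)`, and monotone,
`F(T) ≤ F(T + Q)`, on positive semidefinite matrices.

For `q = 1`, `F` is the trace. For `q < 1`, the substitution `t = λ s` gives
`∫₀^∞ t ^ (q - 1) log (1 + λ / t) dt = c_q λ ^ q` with `c_q > 0`, and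
`∑ᵢ log (1 + λᵢ / t) = log det (N + t) - n log t`, so `c_q F(N)` is the integral of
`log det (N + t) - n log t` against the positive weight `t ^ (q - 1)`. It therefore suffices that
`log det` is monotone and submodular along positive semidefinite increments, and by decomposing an
increment into rank-one terms it suffices to check this for `vvᵀ`, where the matrix determinant
lemma `det (P + vvᵀ) = det P (1 + vᵀ P⁻¹ v)` and the antitonicity of `P ↦ vᵀ P⁻¹ v` do it.
-/

open Matrix

/-- The Schatten `p`-norm of a real matrix `M` with `m` columns:
`(∑ i, σᵢ(M) ^ p) ^ (1/p)`, where the singular values `σᵢ(M)` are the square roots of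
the eigenvalues of `MᴴM` (over `ℝ`, `Mᴴ = Mᵀ`). -/
noncomputable def schattenNorm {N : Type*} [Fintype N] {m : ℕ} (p : ℝ)
    (M : Matrix N (Fin m) ℝ) : ℝ :=
  (∑ i, Real.sqrt ((Matrix.isHermitian_conjTranspose_mul_self M).eigenvalues i) ^ p) ^ (1 / p)

open Set MeasureTheory Real

noncomputable def rpowLogKernel (q ν t : ℝ) : ℝ := t ^ (q - 1) * log (1 + ν / t)

section RpowLogKernel

variable {q ν : ℝ}

theorem rpowLogKernel_nonneg (hν : 0 ≤ ν) {t : ℝ} (ht : 0 < t) : 0 ≤ rpowLogKernel q ν t :=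
  mul_nonneg (rpow_nonneg ht.le _) (log_nonneg (by have := div_nonneg hν ht.le; linarith))

theorem log_one_add_le_rpow_div {s x : ℝ} (hs0 : 0 < s) (hs1 : s ≤ 1) (hx : 0 ≤ x) :
    log (1 + x) ≤ x ^ s / s := by
  have h1x : 0 < 1 + x := by linarith
  have hsub : (1 + x) ^ s ≤ 1 + x ^ s := by
    simpa using rpow_add_le_add_rpow zero_le_one hx hs0.le hs1
  have hlog : s * log (1 + x) ≤ (1 + x) ^ s - 1 := by
    rw [← log_rpow h1x]; exact log_le_sub_one_of_pos (rpow_pos_of_pos h1x s)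
  rw [le_div_iff₀ hs0]; linarith

theorem rpowLogKernel_le {s : ℝ} (hs0 : 0 < s) (hs1 : s ≤ 1) (hν : 0 ≤ ν) {t : ℝ} (ht : 0 < t) :
    rpowLogKernel q ν t ≤ ν ^ s / s * t ^ (q - 1 - s) := by
  calc rpowLogKernel q ν t ≤ t ^ (q - 1) * ((ν / t) ^ s / s) :=
        mul_le_mul_of_nonneg_left (log_one_add_le_rpow_div hs0 hs1 (div_nonneg hν ht.le))
          (rpow_nonneg ht.le _)
    _ = ν ^ s / s * t ^ (q - 1 - s) := by
        rw [div_rpow hν ht.le, rpow_sub ht (q - 1) s]; ring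

theorem continuousOn_rpowLogKernel (hν : 0 ≤ ν) : ContinuousOn (rpowLogKernel q ν) (Ioi 0) := by
  refine (continuousOn_id.rpow_const fun t ht => Or.inl (ne_of_gt ht)).mul
    (ContinuousOn.log (continuousOn_const.add (continuousOn_const.div continuousOn_id
      fun t ht => ne_of_gt ht)) fun t ht => ?_)
  have : 0 ≤ ν / t := div_nonneg hν (le_of_lt ht)
  positivity

theorem integrableOn_rpowLogKernel (hq0 : 0 < q) (hq1 : q < 1) (hν : 0 ≤ ν) :
    IntegrableOn (rpowLogKernel q ν) (Ioi 0) := by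
  have dominated {s : ℝ} (hs0 : 0 < s) (hs1 : s ≤ 1) {S : Set ℝ} (hS : S ⊆ Ioi 0)
      (hSm : MeasurableSet S) (hint : IntegrableOn (fun t => t ^ (q - 1 - s)) S) :
      IntegrableOn (rpowLogKernel q ν) S := by
    refine (hint.const_mul (ν ^ s / s)).mono'
      (((continuousOn_rpowLogKernel hν).mono hS).aestronglyMeasurable hSm) ?_
    rw [ae_restrict_iff' hSm]
    refine ae_of_all _ fun t ht => ?_
    rw [norm_of_nonneg (rpowLogKernel_nonneg hν (hS ht))]
    exact rpowLogKernel_le hs0 hs1 hν (hS ht)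
  rw [← Ioc_union_Ioi_eq_Ioi zero_le_one]
  refine (dominated (s := q / 2) (by linarith) (by linarith) Ioc_subset_Ioi_self
    measurableSet_Ioc ?_).union (dominated zero_lt_one le_rfl
      (Ioi_subset_Ioi zero_le_one) measurableSet_Ioi ?_)
  · exact (intervalIntegral.intervalIntegrable_rpow' (by linarith)).1
  · exact integrableOn_Ioi_rpow_of_lt (by linarith) one_pos

theorem integral_rpowLogKernel (hq0 : 0 < q) (hν : 0 ≤ ν) :
    ∫ t in Ioi 0, rpowLogKernel q ν t = ν ^ q * ∫ t in Ioi 0, rpowLogKernel q 1 t := by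
  rcases hν.eq_or_lt with rfl | hν
  · simp [rpowLogKernel, zero_rpow hq0.ne']
  have hscale : EqOn (fun s => rpowLogKernel q ν (ν * s))
      (fun s => ν ^ (q - 1) * rpowLogKernel q 1 s) (Ioi 0) := fun s hs => by
    have hs : (0 : ℝ) < s := hs
    simp only [rpowLogKernel]
    rw [mul_rpow hν.le hs.le, div_mul_cancel_left₀ hν.ne', one_div]
    ring
  have h := integral_comp_mul_left_Ioi (rpowLogKernel q ν) 0 hν
  rw [mul_zero, setIntegral_congr_fun measurableSet_Ioi hscale, integral_const_mul,
    smul_eq_mul] at h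
  rw [rpow_sub_one hν.ne'] at h
  field_simp at h
  linarith

theorem integral_rpowLogKernel_one_pos (hq0 : 0 < q) (hq1 : q < 1) :
    0 < ∫ t in Ioi 0, rpowLogKernel q 1 t := by
  rw [setIntegral_pos_iff_support_of_nonneg_ae ((ae_restrict_iff' measurableSet_Ioi).mpr
    (ae_of_all _ fun t ht => rpowLogKernel_nonneg zero_le_one ht))
    (integrableOn_rpowLogKernel hq0 hq1 zero_le_one)]
  have : Function.support (rpowLogKernel q 1) ∩ Ioi 0 = Ioi 0 := by
    refine inter_eq_right.mpr fun t (ht : 0 < t) => ne_of_gt ?_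
    exact mul_pos (rpow_pos_of_pos ht _) (log_pos (by have := one_div_pos.mpr ht; linarith))
  simp [this]

end RpowLogKernel

namespace Matrix

theorem conjTranspose_fromRows_mul_fromRows {K₁ K₂ n R : Type*} [Fintype K₁] [Fintype K₂]
    [Semiring R] [StarRing R] (A : Matrix K₁ n R) (B : Matrix K₂ n R) :
    (fromRows A B)ᴴ * fromRows A B = Aᴴ * A + Bᴴ * B := by
  rw [conjTranspose_fromRows_eq_fromCols_conjTranspose, fromCols_mul_fromRows]

variable {n : Type*} [Fintype n]

theorem PosSemidef.dotProduct_mulVec_self_nonneg {M : Matrix n n ℝ} (hM : M.PosSemidef)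
    (x : n → ℝ) : 0 ≤ x ⬝ᵥ (M *ᵥ x) := by
  simpa using hM.dotProduct_mulVec_nonneg x

theorem PosDef.le_add_of_forall_le_add_vecMulVec {φ : Matrix n n ℝ → ℝ}
    (hφ : ∀ P : Matrix n n ℝ, P.PosDef → ∀ v, φ P ≤ φ (P + vecMulVec v v))
    {P Q : Matrix n n ℝ} (hP : P.PosDef) (hQ : Q.PosSemidef) : φ P ≤ φ (P + Q) := by
  obtain ⟨k, v, rfl⟩ := posSemidef_iff_eq_sum_vecMulVec.mp hQ
  simp only [star_trivial]
  induction (Finset.univ : Finset (Fin k)) using Finset.induction_on generalizing P with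
  | empty => simp
  | insert a s ha ih =>
    rw [Finset.sum_insert ha, ← add_assoc]
    exact (hφ P hP (v a)).trans (ih (hP.add_posSemidef (posSemidef_vecMulVec_self_star (v a))))

variable [DecidableEq n]

theorem IsHermitian.det_add_smul_one {N : Matrix n n ℝ} (hN : N.IsHermitian) (t : ℝ) :
    (N + t • 1).det = ∏ i, (hN.eigenvalues i + t) := by
  have h := congrArg (Polynomial.eval (-t)) hN.charpoly_eq
  rw [eval_charpoly, Polynomial.eval_prod, scalar_apply, ← smul_one_eq_diagonal] at h
  rw [← sub_neg_eq_add, ← neg_smul, ← neg_sub, det_neg, h,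
    ← Finset.card_univ, ← Finset.prod_const, ← Finset.prod_mul_distrib]
  simp

theorem IsHermitian.sum_eigenvalues_eq_trace {N : Matrix n n ℝ} (hN : N.IsHermitian) :
    ∑ i, hN.eigenvalues i = N.trace := by
  simp [hN.trace_eq_sum_eigenvalues]

theorem PosDef.det_add_vecMulVec_self {P : Matrix n n ℝ} (hP : P.PosDef) (v : n → ℝ) :
    (P + vecMulVec v v).det = P.det * (1 + v ⬝ᵥ (P⁻¹ *ᵥ v)) := by
  rw [vecMulVec_eq Unit,
    det_add_replicateCol_mul_replicateRow ((isUnit_iff_isUnit_det P).mp hP.isUnit),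
    Matrix.mul_assoc, ← replicateCol_mulVec]
  simp [det_unique, replicateRow_mul_replicateCol_apply]

theorem PosDef.dotProduct_inv_add_mulVec_le {P Q : Matrix n n ℝ} (hP : P.PosDef)
    (hQ : Q.PosSemidef) (v : n → ℝ) : v ⬝ᵥ ((P + Q)⁻¹ *ᵥ v) ≤ v ⬝ᵥ (P⁻¹ *ᵥ v) := by
  have mulVec_inv {M : Matrix n n ℝ} (hM : M.PosDef) : M *ᵥ (M⁻¹ *ᵥ v) = v := by
    rw [mulVec_mulVec, mul_nonsing_inv _ ((isUnit_iff_isUnit_det M).mp hM.isUnit), one_mulVec]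
  set u := P⁻¹ *ᵥ v
  set w := (P + Q)⁻¹ *ᵥ v
  have hPt : Pᵀ = P := by simpa [conjTranspose_eq_transpose_of_trivial] using hP.isHermitian.eq
  have hu : P *ᵥ u = v := mulVec_inv hP
  have hw : P *ᵥ w + Q *ᵥ w = v := by rw [← add_mulVec]; exact mulVec_inv (hP.add_posSemidef hQ)
  have expand : (u - w) ⬝ᵥ (P *ᵥ (u - w)) = u ⬝ᵥ v - 2 * (w ⬝ᵥ v) + w ⬝ᵥ (P *ᵥ w) := by
    have hsymm : u ⬝ᵥ (P *ᵥ w) = w ⬝ᵥ (P *ᵥ u) := by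
      rw [dotProduct_mulVec, ← mulVec_transpose, hPt, dotProduct_comm]
    rw [mulVec_sub, dotProduct_sub, sub_dotProduct, sub_dotProduct, hsymm, hu]
    ring
  have split : w ⬝ᵥ v = w ⬝ᵥ (P *ᵥ w) + w ⬝ᵥ (Q *ᵥ w) := by rw [← dotProduct_add, hw]
  rw [dotProduct_comm v w, dotProduct_comm v u]
  linarith [hP.posSemidef.dotProduct_mulVec_self_nonneg (u - w),
    hQ.dotProduct_mulVec_self_nonneg w]

theorem PosDef.log_det_add_vecMulVec_self {P : Matrix n n ℝ} (hP : P.PosDef) (v : n → ℝ) :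
    log (P + vecMulVec v v).det = log P.det + log (1 + v ⬝ᵥ (P⁻¹ *ᵥ v)) := by
  have hq := hP.inv.posSemidef.dotProduct_mulVec_self_nonneg v
  rw [hP.det_add_vecMulVec_self, log_mul hP.det_pos.ne' (by positivity)]

theorem PosDef.log_det_le_log_det_add {P Q : Matrix n n ℝ} (hP : P.PosDef) (hQ : Q.PosSemidef) :
    log P.det ≤ log (P + Q).det := by
  refine hP.le_add_of_forall_le_add_vecMulVec (φ := fun P => log P.det) (fun P hP v => ?_) hQ
  have hq := hP.inv.posSemidef.dotProduct_mulVec_self_nonneg v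
  rw [hP.log_det_add_vecMulVec_self]
  linarith [log_nonneg (by linarith : (1 : ℝ) ≤ 1 + v ⬝ᵥ (P⁻¹ *ᵥ v))]

theorem PosDef.log_det_add_add_le {P Q R : Matrix n n ℝ} (hP : P.PosDef) (hQ : Q.PosSemidef)
    (hR : R.PosSemidef) :
    log (P + R + Q).det + log P.det ≤ log (P + R).det + log (P + Q).det := by
  suffices log P.det - log (P + Q).det ≤ log (P + R).det - log (P + R + Q).det by linarith
  refine hP.le_add_of_forall_le_add_vecMulVec (φ := fun P => log P.det - log (P + Q).det)
    (fun P hP v => ?_) hR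
  have hPQ := hP.add_posSemidef hQ
  have hq := hPQ.inv.posSemidef.dotProduct_mulVec_self_nonneg v
  rw [add_right_comm, hP.log_det_add_vecMulVec_self, hPQ.log_det_add_vecMulVec_self]
  linarith [log_le_log (by linarith) (by linarith [hP.dotProduct_inv_add_mulVec_le hQ v] :
    1 + v ⬝ᵥ ((P + Q)⁻¹ *ᵥ v) ≤ 1 + v ⬝ᵥ (P⁻¹ *ᵥ v))]

theorem PosSemidef.sum_log_one_add_eigenvalues_div {N : Matrix n n ℝ} (hN : N.PosSemidef)
    {t : ℝ} (ht : 0 < t) :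
    ∑ i, log (1 + hN.isHermitian.eigenvalues i / t)
      = log (N + t • 1).det - Fintype.card n * log t := by
  have heig := hN.eigenvalues_nonneg
  rw [hN.isHermitian.det_add_smul_one, log_prod fun i _ => by have := heig i; positivity,
    ← Finset.card_univ, ← nsmul_eq_mul, ← Finset.sum_const, ← Finset.sum_sub_distrib]
  refine Finset.sum_congr rfl fun i _ => ?_
  rw [← log_div (by have := heig i; positivity) ht.ne', add_div, div_self ht.ne', add_comm]

theorem PosSemidef.eqOn_sum_rpowLogKernel {N : Matrix n n ℝ} (hN : N.PosSemidef) (q : ℝ) :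
    EqOn (fun t => ∑ i, rpowLogKernel q (hN.isHermitian.eigenvalues i) t)
      (fun t => t ^ (q - 1) * (log (N + t • 1).det - Fintype.card n * log t)) (Ioi 0) :=
  fun t ht => by simp only [rpowLogKernel, ← Finset.mul_sum, hN.sum_log_one_add_eigenvalues_div ht]

theorem PosSemidef.integrableOn_rpow_mul_log_det {N : Matrix n n ℝ} (hN : N.PosSemidef) {q : ℝ}
    (hq0 : 0 < q) (hq1 : q < 1) :
    IntegrableOn (fun t => t ^ (q - 1) * (log (N + t • 1).det - Fintype.card n * log t))
      (Ioi 0) :=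
  IntegrableOn.congr_fun (integrable_finsetSum _ fun i _ =>
    integrableOn_rpowLogKernel hq0 hq1 (hN.eigenvalues_nonneg i))
    (hN.eqOn_sum_rpowLogKernel q) measurableSet_Ioi

theorem PosSemidef.integral_rpow_mul_log_det {N : Matrix n n ℝ} (hN : N.PosSemidef) {q : ℝ}
    (hq0 : 0 < q) (hq1 : q < 1) :
    ∫ t in Ioi 0, t ^ (q - 1) * (log (N + t • 1).det - Fintype.card n * log t)
      = (∫ t in Ioi 0, rpowLogKernel q 1 t) * ∑ i, hN.isHermitian.eigenvalues i ^ q := by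
  rw [← setIntegral_congr_fun measurableSet_Ioi (hN.eqOn_sum_rpowLogKernel q),
    integral_finsetSum _ fun i _ =>
      integrableOn_rpowLogKernel hq0 hq1 (hN.eigenvalues_nonneg i), Finset.mul_sum]
  exact Finset.sum_congr rfl fun i _ => by
    rw [integral_rpowLogKernel hq0 (hN.eigenvalues_nonneg i), mul_comm]

theorem sum_eigenvalues_rpow_add_le_of_log_det {q : ℝ} (hq0 : 0 < q) (hq1 : q < 1)
    {N₁ N₂ N₃ N₄ : Matrix n n ℝ} (h₁ : N₁.PosSemidef) (h₂ : N₂.PosSemidef)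
    (h₃ : N₃.PosSemidef) (h₄ : N₄.PosSemidef)
    (h : ∀ t : ℝ, 0 < t → log (N₁ + t • 1).det + log (N₂ + t • 1).det
      ≤ log (N₃ + t • 1).det + log (N₄ + t • 1).det) :
    ∑ i, h₁.isHermitian.eigenvalues i ^ q + ∑ i, h₂.isHermitian.eigenvalues i ^ q
      ≤ ∑ i, h₃.isHermitian.eigenvalues i ^ q + ∑ i, h₄.isHermitian.eigenvalues i ^ q := by
  refine le_of_mul_le_mul_left ?_ (integral_rpowLogKernel_one_pos hq0 hq1)
  rw [mul_add, mul_add, ← h₁.integral_rpow_mul_log_det hq0 hq1,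
    ← h₂.integral_rpow_mul_log_det hq0 hq1, ← h₃.integral_rpow_mul_log_det hq0 hq1,
    ← h₄.integral_rpow_mul_log_det hq0 hq1,
    ← integral_add (h₁.integrableOn_rpow_mul_log_det hq0 hq1)
      (h₂.integrableOn_rpow_mul_log_det hq0 hq1),
    ← integral_add (h₃.integrableOn_rpow_mul_log_det hq0 hq1)
      (h₄.integrableOn_rpow_mul_log_det hq0 hq1)]
  refine setIntegral_mono_on ((h₁.integrableOn_rpow_mul_log_det hq0 hq1).add
    (h₂.integrableOn_rpow_mul_log_det hq0 hq1)) ((h₃.integrableOn_rpow_mul_log_det hq0 hq1).add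
    (h₄.integrableOn_rpow_mul_log_det hq0 hq1)) measurableSet_Ioi fun t ht => ?_
  simp only [← mul_add]
  exact mul_le_mul_of_nonneg_left (by linarith [h t ht]) (rpow_nonneg (le_of_lt ht) _)

theorem PosSemidef.sum_eigenvalues_rpow_add_add_le {q : ℝ} (hq0 : 0 < q) (hq1 : q ≤ 1)
    {R T Q : Matrix n n ℝ} (hR : R.PosSemidef) (hT : T.PosSemidef) (hQ : Q.PosSemidef) :
    ∑ i, ((hR.add hT).add hQ).isHermitian.eigenvalues i ^ q + ∑ i, hT.isHermitian.eigenvalues i ^ q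
      ≤ ∑ i, (hR.add hT).isHermitian.eigenvalues i ^ q
        + ∑ i, (hT.add hQ).isHermitian.eigenvalues i ^ q := by
  rcases hq1.lt_or_eq with hq1 | rfl
  · refine sum_eigenvalues_rpow_add_le_of_log_det hq0 hq1 ((hR.add hT).add hQ) hT (hR.add hT)
      (hT.add hQ) fun t ht => ?_
    have hP : (T + t • 1).PosDef := PosDef.posSemidef_add hT (PosDef.one.smul ht)
    convert hP.log_det_add_add_le hQ hR using 4 <;> abel
  · simp only [rpow_one, IsHermitian.sum_eigenvalues_eq_trace, trace_add]
    linarith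

theorem PosSemidef.sum_eigenvalues_rpow_le_add {q : ℝ} (hq0 : 0 < q) (hq1 : q ≤ 1)
    {T Q : Matrix n n ℝ} (hT : T.PosSemidef) (hQ : Q.PosSemidef) :
    ∑ i, hT.isHermitian.eigenvalues i ^ q ≤ ∑ i, (hT.add hQ).isHermitian.eigenvalues i ^ q := by
  rcases hq1.lt_or_eq with hq1 | rfl
  · have := sum_eigenvalues_rpow_add_le_of_log_det hq0 hq1 hT hT hT (hT.add hQ) fun t ht => by
      have hP : (T + t • 1).PosDef := PosDef.posSemidef_add hT (PosDef.one.smul ht)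
      have := hP.log_det_le_log_det_add hQ
      rw [add_right_comm] at this
      linarith
    linarith
  · simp only [rpow_one, IsHermitian.sum_eigenvalues_eq_trace, trace_add]
    linarith [hQ.trace_nonneg]

end Matrix

theorem schattenNorm_nonneg {K : Type*} [Fintype K] {m : ℕ} (p : ℝ) (M : Matrix K (Fin m) ℝ) :
    0 ≤ schattenNorm p M :=
  rpow_nonneg (Finset.sum_nonneg fun _ _ => rpow_nonneg (sqrt_nonneg _) _) _

theorem schattenNorm_rpow_eq {K : Type*} [Fintype K] {m : ℕ} {p : ℝ} (hp : 0 < p)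
    (M : Matrix K (Fin m) ℝ) {N : Matrix (Fin m) (Fin m) ℝ} (hN : N.IsHermitian)
    (hMN : Mᴴ * M = N) : schattenNorm p M ^ p = ∑ i, hN.eigenvalues i ^ (p / 2) := by
  subst hMN
  have hsqrt (x : ℝ) (hx : 0 ≤ x) : sqrt x ^ p = x ^ (p / 2) := by
    rw [sqrt_eq_rpow, ← rpow_mul hx, one_div_mul_eq_div]
  rw [schattenNorm, ← rpow_mul (Finset.sum_nonneg fun _ _ => rpow_nonneg (sqrt_nonneg _) _),
    one_div_mul_cancel hp.ne', rpow_one]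
  exact Finset.sum_congr rfl fun i _ =>
    hsqrt _ ((posSemidef_conjTranspose_mul_self M).eigenvalues_nonneg i)

/-- For `0 < p ≤ 2` and `0 < ε < 1`, the Schatten p-norm is `(ε, ε)`-smooth:
if `A = [X; Y]` and `(1 − ε)·‖A‖_{S_p} ≤ ‖Y‖_{S_p}`, then for every `C`,
`(1 − ε)·‖[A; C]‖_{S_p} ≤ ‖[Y; C]‖_{S_p}`. -/
theorem schattenNorm_smooth_of_le_two {m : ℕ} (p ε : ℝ) (hp0 : 0 < p) (hp2 : p ≤ 2)
    (hε0 : 0 < ε) (hε1 : ε < 1) :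
    ∀ {n₁ n₂ n₃ : ℕ} (X : Matrix (Fin n₁) (Fin m) ℝ) (Y : Matrix (Fin n₂) (Fin m) ℝ)
      (C : Matrix (Fin n₃) (Fin m) ℝ),
      (1 - ε) * schattenNorm p (Matrix.fromRows X Y) ≤ schattenNorm p Y →
      (1 - ε) * schattenNorm p (Matrix.fromRows (Matrix.fromRows X Y) C) ≤
        schattenNorm p (Matrix.fromRows Y C) := by
  intro n₁ n₂ n₃ X Y C h
  have hε : 0 ≤ 1 - ε := by linarith
  have hθ : (1 - ε) ^ p ≤ 1 := rpow_le_one hε (by linarith) hp0.le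
  have hX := posSemidef_conjTranspose_mul_self X
  have hY := posSemidef_conjTranspose_mul_self Y
  have hC := posSemidef_conjTranspose_mul_self C
  rw [← rpow_le_rpow_iff (mul_nonneg hε (schattenNorm_nonneg _ _)) (schattenNorm_nonneg _ _) hp0,
    mul_rpow hε (schattenNorm_nonneg _ _)] at h ⊢
  rw [schattenNorm_rpow_eq hp0 _ (hX.add hY).isHermitian (conjTranspose_fromRows_mul_fromRows X Y),
    schattenNorm_rpow_eq hp0 _ hY.isHermitian rfl] at h
  rw [schattenNorm_rpow_eq hp0 _ ((hX.add hY).add hC).isHermitian (by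
      rw [conjTranspose_fromRows_mul_fromRows, conjTranspose_fromRows_mul_fromRows]),
    schattenNorm_rpow_eq hp0 _ (hY.add hC).isHermitian (conjTranspose_fromRows_mul_fromRows Y C)]
  have hq0 : 0 < p / 2 := by positivity
  have hq1 : p / 2 ≤ 1 := by linarith
  have hsub := PosSemidef.sum_eigenvalues_rpow_add_add_le hq0 hq1 hX hY hC
  have hmono := hY.sum_eigenvalues_rpow_le_add hq0 hq1 hC
  nlinarith [mul_le_mul_of_nonneg_left hsub (rpow_nonneg hε p),
    mul_nonneg (sub_nonneg.mpr hθ) (sub_nonneg.mpr hmono)]
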